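/- Let λ ∈ ℕ and A ∈ ℕ with A ≥ 1 and 8A < λ. Define g : ℤ/λℤ → ℂ by g(q) = 1 if q is the residue class of some integer k with |k| ≤ A, and g(q) = 0 otherwise. Then: (i) ∑_{q∈ℤ/λℤ} |g(q)|² = 2A+1; (ii) ∑_{(a,b)∈ℤ²} |V_g g(ā, b̄)|² · e^{−π(a²+b²)/λ} ≥ e^{−πA²/λ} · e^{−πλ/A²} · (2A/π)² · (λ + 2A + 1), where ā, b̄ denote the residues of a, b in ℤ/λℤ. (Note e^{−π(a²+b²)/λ} = |𝓛₀(π(a²+b²)/λ)|² with 𝓛₀(v) = e^{−v/2}.) -/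

import Mathlib

/-!
For `|a| ≤ A` the interval `[-A, A]` and its translate by `a` overlap in an interval of
`2A + 1 - |a|` integers, so `V_g g(a, b)` is a geometric sum of that many unimodular terms with
ratio `e^{-2πib/λ}`. While the total phase `2π|b|(2A + 1)/λ` stays below `π`, Jordan's inequality
`|sin x| ≥ 2|x|/π` keeps its modulus above `2(2A + 1 - |a|)/π`. On the box `|a| ≤ A`,
`|b| ≤ λ / (2(2A + 1))` the Gaussian weight is at least `e^{-πA²/λ} e^{-πλ/A²}`, and summing the
squared lower bounds over the box gives the estimate.
-/

open Real Complex
open scoped ComplexConjugate Classical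

/-- The discrete short-time Fourier transform on `ℤ/λℤ`:
`V_γη(a,b) = ∑_{q∈ℤ/λℤ} η(q) conj(γ(q-a)) e^{-2πibq/λ}`. -/
noncomputable def Vdstft (lam : ℕ) (γ η : ZMod lam → ℂ) (a b : ZMod lam) : ℂ :=
  ∑' q : ZMod lam, η q * conj (γ (q - a)) *
    Complex.exp (-(2 * (π : ℂ) * Complex.I * (b.val : ℂ) * (q.val : ℂ)) / (lam : ℂ))

open Finset

theorem ZMod.intCast_eq_intCast_iff_of_abs_sub_lt {N : ℕ} {j k : ℤ} (h : |j - k| < N) :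
    (j : ZMod N) = k ↔ j = k := by
  refine ⟨fun hjk => ?_, congrArg _⟩
  have hdvd : (N : ℤ) ∣ j - k := by
    rw [← dvd_neg, neg_sub]; exact (ZMod.intCast_eq_intCast_iff_dvd_sub _ _ _).mp hjk
  exact sub_eq_zero.mp (Int.eq_zero_of_abs_lt_dvd hdvd h)

theorem ZMod.sum_ite_exists_abs_le_intCast {M : Type*} [AddCommMonoid M] {N A : ℕ} [NeZero N]
    (h : 2 * A < N) (F : ZMod N → M) :
    ∑ q : ZMod N, (if ∃ k : ℤ, |k| ≤ (A : ℤ) ∧ (k : ZMod N) = q then F q else 0)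
      = ∑ k ∈ Icc (-(A : ℤ)) A, F k := by
  have hsupp : univ.filter (fun q : ZMod N => ∃ k : ℤ, |k| ≤ (A : ℤ) ∧ (k : ZMod N) = q)
      = (Icc (-(A : ℤ)) A).image (↑) := by
    ext q; simp [abs_le]
  rw [← sum_filter, hsupp, sum_image]
  intro j hj k hk hjk
  simp only [coe_Icc, Set.mem_Icc] at hj hk
  exact (ZMod.intCast_eq_intCast_iff_of_abs_sub_lt (by grind)).mp hjk

noncomputable def centeredIndicator (N A : ℕ) (q : ZMod N) : ℂ :=
  if ∃ k : ℤ, |k| ≤ (A : ℤ) ∧ (k : ZMod N) = q then 1 else 0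

theorem centeredIndicator_intCast {N A : ℕ} {k : ℤ} (hk : |k| + A < N) :
    centeredIndicator N A k = if |k| ≤ A then 1 else 0 := by
  refine if_congr ⟨fun ⟨j, hj, hjk⟩ => ?_, fun hk => ⟨k, hk, rfl⟩⟩ rfl rfl
  rwa [← (ZMod.intCast_eq_intCast_iff_of_abs_sub_lt (by grind)).mp hjk]

theorem tsum_norm_sq_centeredIndicator {N A : ℕ} (h : 2 * A < N) :
    ∑' q : ZMod N, ‖centeredIndicator N A q‖ ^ 2 = 2 * A + 1 := by
  have : NeZero N := ⟨by omega⟩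
  simp only [tsum_fintype, centeredIndicator, apply_ite (fun z : ℂ => ‖z‖ ^ 2), norm_one,
    norm_zero, one_pow, ne_eq, OfNat.ofNat_ne_zero, not_false_eq_true, zero_pow]
  rw [ZMod.sum_ite_exists_abs_le_intCast h, sum_const, Int.card_Icc, nsmul_eq_mul, mul_one]
  norm_cast
  omega

theorem two_mul_div_pi_le_norm_geom_sum (L : ℕ) {θ : ℝ} (h : |θ| * L ≤ π) :
    2 * L / π ≤ ‖∑ j ∈ range L, Complex.exp (I * θ) ^ j‖ := by
  rcases eq_or_ne θ 0 with rfl | hθ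
  · simp only [ofReal_zero, mul_zero, Complex.exp_zero, one_pow, sum_const, card_range,
      nsmul_eq_mul, mul_one, Complex.norm_natCast]
    rw [div_le_iff₀ pi_pos]
    nlinarith [two_le_pi, (Nat.cast_nonneg L : (0 : ℝ) ≤ L)]
  have hsin : 2 / π * |L * θ / 2| ≤ |Real.sin (L * θ / 2)| := by
    refine mul_abs_le_abs_sin ?_
    rw [abs_div, abs_mul, Nat.abs_cast, abs_two]
    linarith
  have htelescope : ‖∑ j ∈ range L, Complex.exp (I * θ) ^ j‖ * ‖Complex.exp (I * θ) - 1‖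
      = 2 * |Real.sin (L * θ / 2)| := by
    rw [← norm_mul, geom_sum_mul, ← Complex.exp_nat_mul,
      show (L : ℂ) * (I * θ) = I * ((L * θ : ℝ) : ℂ) by push_cast; ring,
      norm_exp_I_mul_ofReal_sub_one, norm_mul, Real.norm_eq_abs, Real.norm_eq_abs, abs_two]
  have hchord : ‖Complex.exp (I * θ) - 1‖ ≤ |θ| := norm_exp_I_mul_ofReal_sub_one_le
  have hθpos : 0 < |θ| := abs_pos.mpr hθ
  rw [abs_div, abs_mul, Nat.abs_cast, abs_two] at hsin
  rw [div_le_iff₀ pi_pos]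
  refine le_of_mul_le_mul_right ?_ hθpos
  calc 2 * L * |θ| = π * (2 * (2 / π * (L * |θ| / 2))) := by field_simp
    _ ≤ π * (‖∑ j ∈ range L, Complex.exp (I * θ) ^ j‖ * ‖Complex.exp (I * θ) - 1‖) := by
      rw [htelescope]; gcongr
    _ ≤ π * (‖∑ j ∈ range L, Complex.exp (I * θ) ^ j‖ * |θ|) := by gcongr
    _ = ‖∑ j ∈ range L, Complex.exp (I * θ) ^ j‖ * π * |θ| := by ring

theorem two_mul_div_pi_le_norm_sum_Icc_exp (lo hi : ℤ) {θ : ℝ} (h : |θ| * (hi + 1 - lo) ≤ π) :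
    2 * (hi + 1 - lo) / π ≤ ‖∑ k ∈ Icc lo hi, Complex.exp (I * (k * θ : ℝ))‖ := by
  rcases lt_or_ge (hi + 1 - lo) 0 with hneg | hnonneg
  · have : (2 * (hi + 1 - lo) / π : ℝ) < 0 :=
      div_neg_of_neg_of_pos (by exact_mod_cast (by omega : 2 * (hi + 1 - lo) < 0)) pi_pos
    exact this.le.trans (norm_nonneg _)
  have hL : (((hi + 1 - lo).toNat : ℕ) : ℝ) = hi + 1 - lo := by
    rw [← Int.cast_natCast, Int.toNat_of_nonneg hnonneg]; push_cast; ring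
  have hshift : ∑ k ∈ Icc lo hi, Complex.exp (I * (k * θ : ℝ))
      = Complex.exp (I * (lo * θ : ℝ)) *
          ∑ j ∈ range (hi + 1 - lo).toNat, Complex.exp (I * θ) ^ j := by
    rw [Int.Icc_eq_finset_map, sum_map, mul_sum]
    refine sum_congr rfl fun j _ => ?_
    rw [← Complex.exp_nat_mul, ← Complex.exp_add]
    simp only [Function.Embedding.trans_apply, Nat.castEmbedding_apply, addLeftEmbedding_apply]
    push_cast; ring_nf
  rw [hshift, norm_mul, norm_exp_I_mul_ofReal, one_mul, ← hL]
  exact two_mul_div_pi_le_norm_geom_sum _ (hL ▸ h)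

theorem exp_neg_two_pi_I_val_mul_val_intCast {N : ℕ} [NeZero N] (b k : ℤ) :
    Complex.exp (-(2 * (π : ℂ) * I * ((b : ZMod N).val : ℂ) * ((k : ZMod N).val : ℂ)) / N)
      = Complex.exp (I * (k * (-(2 * π * b / N)) : ℝ)) := by
  have hcast : (((b : ZMod N).val * (k : ZMod N).val : ℕ) : ZMod N) = ((b * k : ℤ) : ZMod N) := by
    push_cast; simp only [ZMod.natCast_val, ZMod.cast_id', id_eq]
  -- `ZMod.toCircle` absorbs the reduction of `b.val * k.val` modulo `N`.
  have hphase : Complex.exp (2 * π * I * ((b : ZMod N).val : ℂ) * ((k : ZMod N).val : ℂ) / N)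
      = Complex.exp (2 * π * I * (b * k : ℤ) / N) := by
    have := congrArg (fun z : Circle => (z : ℂ)) (congrArg ZMod.toCircle hcast)
    rw [ZMod.toCircle_natCast, ZMod.toCircle_intCast] at this
    simpa only [Nat.cast_mul, mul_assoc] using this
  rw [neg_div, Complex.exp_neg, hphase, ← Complex.exp_neg]
  congr 1
  push_cast
  ring

theorem Vdstft_centeredIndicator_intCast {N A : ℕ} [NeZero N] (h : 3 * A < N) {a : ℤ}
    (ha : |a| ≤ A) (b : ℤ) :
    Vdstft N (centeredIndicator N A) (centeredIndicator N A) a b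
      = ∑ k ∈ Icc (max (-(A : ℤ)) (a - A)) (min (A : ℤ) (a + A)),
          Complex.exp (I * (k * (-(2 * π * b / N)) : ℝ)) := by
  rw [Vdstft, tsum_fintype]
  simp only [centeredIndicator, ite_mul, one_mul, zero_mul]
  rw [ZMod.sum_ite_exists_abs_le_intCast (by omega)]
  have hoverlap : (Icc (-(A : ℤ)) A).filter (fun k => |k - a| ≤ A)
      = Icc (max (-(A : ℤ)) (a - A)) (min (A : ℤ) (a + A)) := by
    ext k; simp only [mem_filter, mem_Icc, abs_le, max_le_iff, le_min_iff]; omega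
  rw [← hoverlap, sum_filter]
  refine sum_congr rfl fun k hk => ?_
  rw [mem_Icc] at hk
  rw [← Int.cast_sub, ← centeredIndicator, centeredIndicator_intCast (by grind)]
  split_ifs
  · rw [map_one, one_mul, exp_neg_two_pi_I_val_mul_val_intCast]
  · rw [map_zero, zero_mul]

theorem two_mul_div_pi_le_norm_Vdstft_centeredIndicator {N A : ℕ} [NeZero N] (h : 3 * A < N)
    {a b : ℤ} (ha : |a| ≤ A) (hb : 2 * |b| * (2 * A + 1) ≤ N) :
    2 * (2 * A + 1 - |(a : ℝ)|) / π
      ≤ ‖Vdstft N (centeredIndicator N A) (centeredIndicator N A) a b‖ := by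
  have hlen : ((min (A : ℤ) (a + A) : ℤ) : ℝ) + 1 - (max (-(A : ℤ)) (a - A) : ℤ)
      = 2 * A + 1 - |(a : ℝ)| := by
    rw [← Int.cast_abs]
    exact_mod_cast (by rcases abs_cases a with ⟨_, _⟩ | ⟨_, _⟩ <;> omega)
  rw [Vdstft_centeredIndicator_intCast h ha, ← hlen]
  refine two_mul_div_pi_le_norm_sum_Icc_exp _ _ ?_
  have hN : (0 : ℝ) < N := by exact_mod_cast Nat.pos_of_neZero N
  have hb' : 2 * |(b : ℝ)| * (2 * A + 1) ≤ N := by exact_mod_cast hb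
  rw [hlen, abs_neg, abs_div, abs_mul, abs_mul, abs_two, abs_of_pos pi_pos, Nat.abs_cast,
    div_mul_eq_mul_div, div_le_iff₀ hN]
  calc 2 * π * |(b : ℝ)| * (2 * A + 1 - |(a : ℝ)|) ≤ π * (2 * |(b : ℝ)| * (2 * A + 1)) := by
        nlinarith [mul_nonneg (mul_nonneg pi_pos.le (abs_nonneg (b : ℝ))) (abs_nonneg (a : ℝ))]
    _ ≤ π * N := by gcongr

theorem exp_mul_exp_le_gaussian {N A : ℕ} (hA : 0 < A) (hN : 0 < N) {a b : ℤ}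
    (ha : |a| ≤ A) (hb : A * |b| ≤ N) :
    Real.exp (-π * A ^ 2 / N) * Real.exp (-π * N / A ^ 2)
      ≤ Real.exp (-π * ((a : ℝ) ^ 2 + (b : ℝ) ^ 2) / N) := by
  have ha' : (a : ℝ) ^ 2 ≤ A ^ 2 := sq_le_sq' (by exact_mod_cast (abs_le.mp ha).1)
    (by exact_mod_cast (abs_le.mp ha).2)
  have hb' : (A * b : ℝ) ^ 2 ≤ (N : ℝ) ^ 2 := by
    rw [← sq_abs, abs_mul, Nat.abs_cast]; gcongr; exact_mod_cast hb
  have hNpos : (0 : ℝ) < N := by exact_mod_cast hN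
  have hApos : (0 : ℝ) < A := by exact_mod_cast hA
  rw [← Real.exp_add, Real.exp_le_exp, neg_mul, neg_mul, neg_mul, neg_div, neg_div, neg_div,
    ← neg_add, neg_le_neg_iff, mul_add, add_div]
  gcongr ?_ + ?_
  · gcongr
  · rw [div_le_div_iff₀ hNpos (by positivity)]
    nlinarith [mul_le_mul_of_nonneg_left hb' pi_pos.le]

theorem le_norm_sq_Vdstft_centeredIndicator_mul_gaussian {N A M : ℕ} [NeZero N] (hA : 0 < A)
    (h : 3 * A < N) (hM : M * (2 * (2 * A + 1)) ≤ N) {a b : ℤ} (ha : |a| ≤ A) (hb : |b| ≤ M) :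
    (2 * (2 * A + 1 - |(a : ℝ)|) / π) ^ 2 * (Real.exp (-π * A ^ 2 / N) * Real.exp (-π * N / A ^ 2))
      ≤ ‖Vdstft N (centeredIndicator N A) (centeredIndicator N A) a b‖ ^ 2 *
          Real.exp (-π * ((a : ℝ) ^ 2 + (b : ℝ) ^ 2) / N) := by
  have hb' : 2 * |b| * (2 * A + 1) ≤ N := by
    have : ((M * (2 * (2 * A + 1)) : ℕ) : ℤ) ≤ N := by exact_mod_cast hM
    push_cast at this; nlinarith
  have ha' : |(a : ℝ)| ≤ A := by exact_mod_cast ha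
  gcongr
  · exact div_nonneg (by linarith) pi_pos.le
  · exact two_mul_div_pi_le_norm_Vdstft_centeredIndicator h ha hb'
  · exact exp_mul_exp_le_gaussian hA (Nat.pos_of_neZero N) ha (by nlinarith [abs_nonneg b])

theorem sum_abs_Icc_neg_self (A : ℕ) : ∑ a ∈ Icc (-(A : ℤ)) A, |a| = A * (A + 1) := by
  induction A with
  | zero => simp
  | succ A ih =>
    have hIcc : Icc (-((A + 1 : ℕ) : ℤ)) (A + 1 : ℕ)
        = insert (-((A : ℤ) + 1)) (insert ((A : ℤ) + 1) (Icc (-(A : ℤ)) A)) := by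
      ext x; simp only [mem_Icc, mem_insert]; omega
    rw [hIcc, sum_insert (by simp only [mem_insert, mem_Icc]; omega),
      sum_insert (by simp only [mem_Icc]; omega), ih, abs_neg, abs_of_nonneg (by omega)]
    push_cast; ring

theorem sq_mul_le_mul_sum_sq_sub_abs {N A M : ℕ} (h8 : 8 * A < N)
    (hM : N < 2 * (2 * A + 1) * (M + 1)) :
    (A : ℝ) ^ 2 * (N + 2 * A + 1)
      ≤ (2 * M + 1) * ∑ a ∈ Icc (-(A : ℤ)) A, (2 * A + 1 - |(a : ℝ)|) ^ 2 := by
  have habs : ∑ a ∈ Icc (-(A : ℤ)) A, |(a : ℝ)| = A * (A + 1) := by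
    exact_mod_cast sum_abs_Icc_neg_self A
  have hsq : (2 * A + 1 : ℝ) * (2 * A ^ 2 + 2 * A + 1)
      ≤ ∑ a ∈ Icc (-(A : ℤ)) A, (2 * A + 1 - |(a : ℝ)|) ^ 2 := by
    calc (2 * A + 1 : ℝ) * (2 * A ^ 2 + 2 * A + 1)
        = ∑ a ∈ Icc (-(A : ℤ)) A, ((2 * A + 1 : ℝ) ^ 2 - 2 * (2 * A + 1) * |(a : ℝ)|) := by
          rw [sum_sub_distrib, ← mul_sum, habs, sum_const, Int.card_Icc, nsmul_eq_mul,
            show (A + 1 - -(A : ℤ)).toNat = 2 * A + 1 by omega]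
          push_cast; ring
      _ ≤ _ := sum_le_sum fun a _ => by nlinarith [sq_nonneg |(a : ℝ)|]
  have hN : (N : ℝ) + 1 ≤ 2 * (2 * A + 1) * (M + 1) := by exact_mod_cast hM
  have h8' : 8 * (A : ℝ) + 1 ≤ N := by exact_mod_cast h8
  calc (A : ℝ) ^ 2 * ((N : ℝ) + 2 * A + 1) ≤ ((N : ℝ) - 2 * A) * (2 * A ^ 2 + 2 * A + 1) := by
        nlinarith [mul_le_mul_of_nonneg_right h8' (by positivity : (0 : ℝ) ≤ (A + 1) ^ 2)]
    _ ≤ (2 * (M : ℝ) + 1) * (2 * A + 1) * (2 * A ^ 2 + 2 * A + 1) := by gcongr; linarith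
    _ ≤ _ := by rw [mul_assoc]; gcongr

theorem summable_exp_neg_pi_sq_div {N : ℕ} (hN : 0 < N) :
    Summable (fun n : ℤ => Real.exp (-π * n ^ 2 / N)) := by
  have := summable_pow_mul_jacobiTheta₂_term_bound 0 (T := 1 / N) (by positivity) 0
  refine this.congr fun n => ?_
  simp only [pow_zero, one_mul, mul_zero, zero_mul, sub_zero]
  ring_nf

theorem summable_norm_sq_mul_gaussian {N : ℕ} [NeZero N] (F : ZMod N → ZMod N → ℂ) :
    Summable (fun ab : ℤ × ℤ =>
      ‖F ab.1 ab.2‖ ^ 2 * Real.exp (-π * ((ab.1 : ℝ) ^ 2 + (ab.2 : ℝ) ^ 2) / N)) := by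
  have hgauss := summable_exp_neg_pi_sq_div (Nat.pos_of_neZero N)
  have hprod := (hgauss.mul_of_nonneg hgauss (fun _ => (exp_pos _).le) fun _ => (exp_pos _).le)
  set C := ∑ p : ZMod N × ZMod N, ‖F p.1 p.2‖ ^ 2
  refine (hprod.mul_left C).of_nonneg_of_le (fun _ => by positivity) fun ab => ?_
  rw [← Real.exp_add, show -π * ((ab.1 : ℝ) ^ 2 + (ab.2 : ℝ) ^ 2) / N
      = -π * (ab.1 : ℝ) ^ 2 / N + -π * (ab.2 : ℝ) ^ 2 / N by ring]
  gcongr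
  exact single_le_sum (f := fun p : ZMod N × ZMod N => ‖F p.1 p.2‖ ^ 2)
    (fun _ _ => by positivity) (mem_univ ((ab.1 : ZMod N), (ab.2 : ZMod N)))

/-- For `1 ≤ A` and `8A < λ`, the indicator `g = 1_{[-A,A]}` on `ℤ/λℤ` satisfies
(i) `‖g‖²_{ℓ²} = 2A+1`, and (ii) the weighted sum of `|V_g g|²` against
`e^{-π(a²+b²)/λ} = |𝓛₀(π(a²+b²)/λ)|²` is at least
`e^{-πA²/λ} e^{-πλ/A²} (2A/π)² (λ + 2A + 1)`. -/
theorem dstft_indicator_lower_bound (lam A : ℕ) (hA : 1 ≤ A) (h8 : 8 * A < lam) :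
    (∑' q : ZMod lam,
        ‖(if ∃ k : ℤ, |k| ≤ (A : ℤ) ∧ (k : ZMod lam) = q then (1 : ℂ) else 0)‖ ^ 2)
      = 2 * (A : ℝ) + 1 ∧
    Real.exp (-π * (A : ℝ) ^ 2 / (lam : ℝ)) * Real.exp (-π * (lam : ℝ) / (A : ℝ) ^ 2) *
        (2 * (A : ℝ) / π) ^ 2 * ((lam : ℝ) + 2 * (A : ℝ) + 1)
      ≤ ∑' ab : ℤ × ℤ,
          ‖Vdstft lam
              (fun q => if ∃ k : ℤ, |k| ≤ (A : ℤ) ∧ (k : ZMod lam) = q then (1 : ℂ) else 0)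
              (fun q => if ∃ k : ℤ, |k| ≤ (A : ℤ) ∧ (k : ZMod lam) = q then (1 : ℂ) else 0)
              ((ab.1 : ZMod lam)) ((ab.2 : ZMod lam))‖ ^ 2 *
            Real.exp (-π * ((ab.1 : ℝ) ^ 2 + (ab.2 : ℝ) ^ 2) / (lam : ℝ)) := by
  refine ⟨tsum_norm_sq_centeredIndicator (by omega), ?_⟩
  have : NeZero lam := ⟨by omega⟩
  set M := lam / (2 * (2 * A + 1))
  set w := Real.exp (-π * (A : ℝ) ^ 2 / lam) * Real.exp (-π * lam / (A : ℝ) ^ 2)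
  have hMN : M * (2 * (2 * A + 1)) ≤ lam := Nat.div_mul_le_self _ _
  have hNM : lam < 2 * (2 * A + 1) * (M + 1) := by
    have := Nat.lt_mul_div_succ lam (by omega : 0 < 2 * (2 * A + 1)); grind
  calc w * (2 * (A : ℝ) / π) ^ 2 * ((lam : ℝ) + 2 * A + 1)
      = 4 * w / π ^ 2 * ((A : ℝ) ^ 2 * ((lam : ℝ) + 2 * A + 1)) := by ring
    _ ≤ 4 * w / π ^ 2 * ((2 * M + 1) * ∑ a ∈ Icc (-(A : ℤ)) A, (2 * A + 1 - |(a : ℝ)|) ^ 2) :=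
      mul_le_mul_of_nonneg_left (sq_mul_le_mul_sum_sq_sub_abs h8 hNM) (by positivity)
    _ = ∑ ab ∈ Icc (-(A : ℤ)) A ×ˢ Icc (-(M : ℤ)) M,
          (2 * (2 * A + 1 - |(ab.1 : ℝ)|) / π) ^ 2 * w := by
      rw [sum_product, mul_sum, mul_sum]
      refine sum_congr rfl fun a _ => ?_
      simp only [sum_const, Int.card_Icc, nsmul_eq_mul]
      rw [show (M + 1 - -(M : ℤ)).toNat = 2 * M + 1 by omega]
      push_cast; ring
    _ ≤ ∑ ab ∈ Icc (-(A : ℤ)) A ×ˢ Icc (-(M : ℤ)) M,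
          ‖Vdstft lam (centeredIndicator lam A) (centeredIndicator lam A) ab.1 ab.2‖ ^ 2 *
            Real.exp (-π * ((ab.1 : ℝ) ^ 2 + (ab.2 : ℝ) ^ 2) / lam) := by
      refine sum_le_sum fun ab hab => ?_
      simp only [mem_product, mem_Icc, ← abs_le] at hab
      exact le_norm_sq_Vdstft_centeredIndicator_mul_gaussian (by omega) (by omega) hMN hab.1 hab.2
    _ ≤ _ := (summable_norm_sq_mul_gaussian _).sum_le_tsum _ fun _ _ => by positivity
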